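/- arXiv:2511.21170 — 7 statements merged into one kernel-verified Lean document; each statement's English description precedes it below -/
import Mathlib

section
/- If G is a graph of order n with no isolated vertices and G is not the complete graph K_n, then SEC(G) ≥ δ(G) + 2, where δ(G) is the minimum degree of G. -/
namespace SecCoal

/-- `D` is a dominating set of `G`. -/
def IsDominating {V : Type*} (G : SimpleGraph V) (D : Set V) : Prop :=
  ∀ v ∉ D, ∃ u ∈ D, G.Adj u v

/-- `S` is a secure dominating set of `G`. -/
def IsSecureDominating {V : Type*} (G : SimpleGraph V) (S : Set V) : Prop :=
  IsDominating G S ∧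
    ∀ u ∉ S, ∃ v ∈ S, G.Adj v u ∧ IsDominating G ((S \ {v}) ∪ {u})

/-- Degree of a vertex. -/
noncomputable def deg {V : Type*} (G : SimpleGraph V) (v : V) : ℕ :=
  (G.neighborSet v).ncard

/-- Minimum degree. -/
noncomputable def minDeg {V : Type*} (G : SimpleGraph V) : ℕ :=
  sInf (Set.range (deg G))

/-- Maximum degree. -/
noncomputable def maxDeg {V : Type*} (G : SimpleGraph V) : ℕ :=
  sSup (Set.range (deg G))

/-- `π` is a secure coalition partition of `G`. -/
def IsSecPartition {V : Type*} (G : SimpleGraph V) (π : Finset (Set V)) : Prop :=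
  Setoid.IsPartition (↑π : Set (Set V)) ∧
    ∀ A ∈ π,
      (∃ v, A = {v} ∧ deg G v = Nat.card V - 1 ∧ IsSecureDominating G A) ∨
      (¬ IsSecureDominating G A ∧
        ∃ B ∈ π, B ≠ A ∧ IsSecureDominating G (A ∪ B))

/-- The secure coalition number of `G`. -/
noncomputable def SEC {V : Type*} (G : SimpleGraph V) : ℕ :=
  sSup {k | ∃ π : Finset (Set V), IsSecPartition G π ∧ π.card = k}

/-- Two disjoint sets form a secure coalition. -/
def FormsSecCoalition {V : Type*} (G : SimpleGraph V) (A B : Set V) : Prop :=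
  Disjoint A B ∧ ¬ IsSecureDominating G A ∧ ¬ IsSecureDominating G B ∧
    IsSecureDominating G (A ∪ B)

/-- The domination number of `G`. -/
noncomputable def gammaDom {V : Type*} (G : SimpleGraph V) : ℕ :=
  sInf {k | ∃ D : Set V, IsDominating G D ∧ D.ncard = k}

/-- The secure domination number of `G`. -/
noncomputable def secDomNum {V : Type*} (G : SimpleGraph V) : ℕ :=
  sInf {k | ∃ S : Set V, IsSecureDominating G S ∧ S.ncard = k}

/-- `π` is a coalition partition (w.r.t. domination) of `G`. -/
def IsCoalitionPartition {V : Type*} (G : SimpleGraph V) (π : Finset (Set V)) : Prop :=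
  Setoid.IsPartition (↑π : Set (Set V)) ∧
    ∀ A ∈ π,
      (∃ v, A = {v} ∧ IsDominating G A) ∨
      (¬ IsDominating G A ∧ ∃ B ∈ π, B ≠ A ∧ IsDominating G (A ∪ B))

/-- The coalition number of `G`. -/
noncomputable def CNum {V : Type*} (G : SimpleGraph V) : ℕ :=
  sSup {k | ∃ π : Finset (Set V), IsCoalitionPartition G π ∧ π.card = k}

/-- The secure coalition graph of `G` w.r.t. a partition `π`. -/
def SCG {V : Type*} (G : SimpleGraph V) (π : Finset (Set V)) :
    SimpleGraph {A : Set V // A ∈ π} where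
  Adj A B := FormsSecCoalition G A.1 B.1
  symm := by
    constructor
    rintro A B ⟨hd, h1, h2, h3⟩
    exact ⟨hd.symm, h2, h1, by rwa [Set.union_comm]⟩
  loopless := by
    constructor
    rintro A ⟨hd, h1, h2, h3⟩
    exact h1 (by simpa using h3)

end SecCoal

open SecCoal

/-!
Let `v` be a vertex of minimum degree `δ` and `C = N[v]` its closed neighbourhood, so `|C| = δ + 1`.
Any set whose complement has at most `δ` vertices is secure dominating: a vertex outside it has at
least `δ` neighbours but only `δ - 1` other vertices outside, and a swap keeps the complement's
size. Hence `{u} ∪ Cᶜ` is secure dominating for every `u ∈ C`, while `Cᶜ` does not dominate `v` and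
no singleton is secure dominating in a non-complete graph. So `Cᶜ` together with the `δ + 1`
singletons of `C` is a secure coalition partition.
-/

open Set

namespace SecCoal

variable {V : Type*} {G : SimpleGraph V}

lemma minDeg_le_deg (v : V) : minDeg G ≤ deg G v := Nat.sInf_le ⟨v, rfl⟩

lemma exists_deg_eq_minDeg [Nonempty V] (G : SimpleGraph V) : ∃ v, deg G v = minDeg G :=
  Nat.sInf_mem (range_nonempty _)

lemma deg_lt_ncard_of_neighborSet_subset [Finite V] {y : V} {T : Set V} (hy : y ∈ T)
    (hT : G.neighborSet y ⊆ T) : deg G y < T.ncard :=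
  ncard_lt_ncard ((ssubset_iff_of_subset hT).2 ⟨y, hy, G.notMem_neighborSet_self⟩)

lemma isDominating_of_ncard_compl_le [Finite V] {D : Set V} (h : Dᶜ.ncard ≤ minDeg G) :
    IsDominating G D := by
  intro y hy
  by_contra! hnd
  have hN : G.neighborSet y ⊆ Dᶜ := fun x hxy hxD => hnd x hxD (G.adj_symm hxy)
  exact (deg_lt_ncard_of_neighborSet_subset hy hN).not_ge (h.trans (minDeg_le_deg y))

lemma isSecureDominating_of_ncard_compl_le [Finite V] {D : Set V} (h : Dᶜ.ncard ≤ minDeg G) :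
    IsSecureDominating G D := by
  have hD := isDominating_of_ncard_compl_le h
  refine ⟨hD, fun u hu => ?_⟩
  obtain ⟨z, hz, hzu⟩ := hD u hu
  refine ⟨z, hz, hzu, isDominating_of_ncard_compl_le ?_⟩
  have hswap : ((D \ {z}) ∪ {u})ᶜ = insert z (Dᶜ \ {u}) := by
    ext x
    rcases eq_or_ne x z with rfl | hxz
    · simp [hz, hzu.ne]
    · simp [hxz, and_comm]
  rwa [hswap, ncard_exchange (not_not_intro hz) hu]

lemma isDominating_singleton_iff {a : V} : IsDominating G {a} ↔ G.IsUniversal a := by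
  simp [IsDominating, SimpleGraph.IsUniversal, eq_comm]

lemma eq_top_of_isSecureDominating_singleton {a : V} (h : IsSecureDominating G {a}) : G = ⊤ := by
  obtain ⟨ha, hswap⟩ := h
  rw [isDominating_singleton_iff] at ha
  refine SimpleGraph.eq_top_iff_forall_isUniversal.2 fun b => ?_
  rcases eq_or_ne b a with rfl | hba
  · exact ha
  obtain ⟨z, hz, -, hb⟩ := hswap b hba
  rwa [mem_singleton_iff.1 hz, sdiff_self, empty_union, isDominating_singleton_iff] at hb

lemma minDeg_add_two_le_card [Finite V] (hG : G ≠ ⊤) : minDeg G + 2 ≤ Nat.card V := by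
  obtain ⟨b, c, hbc, hnadj⟩ : ∃ b c, b ≠ c ∧ ¬ G.Adj b c := by
    simpa [SimpleGraph.eq_top_iff_forall_ne_adj] using hG
  have hb : deg G b < ({c}ᶜ : Set V).ncard :=
    deg_lt_ncard_of_neighborSet_subset hbc (fun x hx (hxc : x = c) => hnadj (hxc ▸ hx))
  have hcompl := ncard_add_ncard_compl ({c} : Set V)
  rw [ncard_singleton] at hcompl
  have := minDeg_le_deg (G := G) b
  omega

lemma not_isDominating_compl_insert_neighborSet (v : V) :
    ¬ IsDominating G (insert v (G.neighborSet v))ᶜ := fun hdom => by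
  obtain ⟨z, hz, hzv⟩ := hdom v (by simp)
  exact hz (mem_insert_of_mem _ hzv.symm)

lemma isPartition_insert_compl_image_singleton {C : Set V} (hC : Cᶜ.Nonempty) :
    Setoid.IsPartition (insert Cᶜ ((fun u => ({u} : Set V)) '' C)) := by
  refine ⟨?_, fun a => ?_⟩
  · rintro (h | ⟨u, -, h⟩)
    exacts [hC.ne_empty h.symm, singleton_ne_empty u h]
  by_cases ha : a ∈ C
  · refine ⟨{a}, ⟨mem_insert_of_mem _ ⟨a, ha, rfl⟩, rfl⟩, ?_⟩
    rintro B ⟨rfl | ⟨u, -, rfl⟩, haB⟩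
    exacts [absurd ha haB, by rw [mem_singleton_iff.1 haB]]
  · refine ⟨Cᶜ, ⟨mem_insert _ _, ha⟩, ?_⟩
    rintro B ⟨rfl | ⟨u, hu, rfl⟩, haB⟩
    exacts [rfl, absurd (mem_singleton_iff.1 haB ▸ hu) ha]

lemma le_SEC [Finite V] {π : Finset (Set V)} (hπ : IsSecPartition G π) : π.card ≤ SEC G := by
  have := Fintype.ofFinite (Set V)
  exact le_csSup ⟨Fintype.card (Set V), by rintro k ⟨π', -, rfl⟩; exact π'.card_le_univ⟩ ⟨π, hπ, rfl⟩

lemma ncard_add_one_le_SEC [Finite V] (hG : G ≠ ⊤) {C : Set V} (hC : C.Nonempty)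
    (hCc : Cᶜ.Nonempty) (hCc_not_sec : ¬ IsSecureDominating G Cᶜ)
    (hins : ∀ u ∈ C, IsSecureDominating G (insert u Cᶜ)) : C.ncard + 1 ≤ SEC G := by
  classical
  set π : Finset (Set V) := insert Cᶜ (C.toFinite.toFinset.image fun u => ({u} : Set V))
  have hπ : (π : Set (Set V)) = insert Cᶜ ((fun u => ({u} : Set V)) '' C) := by
    simp [π]
  have hCc_not_secMem : Cᶜ ∉ C.toFinite.toFinset.image fun u => ({u} : Set V) := by
    simp only [Finset.mem_image, Finite.mem_toFinset, not_exists, not_and]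
    exact fun u hu h => (h ▸ mem_singleton u : u ∈ Cᶜ) hu
  have hcard : π.card = C.ncard + 1 := by
    rw [Finset.card_insert_of_notMem hCc_not_secMem,
      Finset.card_image_of_injective _ singleton_injective, ncard_eq_toFinset_card C]
  rw [← hcard]
  refine le_SEC ⟨hπ ▸ isPartition_insert_compl_image_singleton hCc, fun A hA => Or.inr ?_⟩
  rw [← Finset.mem_coe, hπ] at hA
  obtain rfl | ⟨u, hu, rfl⟩ := hA
  · obtain ⟨u, hu⟩ := hC
    refine ⟨hCc_not_sec, {u}, by simp [π, hu], fun h => (h ▸ mem_singleton u : u ∈ Cᶜ) hu, ?_⟩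
    simpa [union_comm] using hins u hu
  · refine ⟨fun h => hG (eq_top_of_isSecureDominating_singleton h), Cᶜ, by simp [π],
      fun h => (h ▸ mem_singleton u : u ∈ Cᶜ) hu, ?_⟩
    simpa using hins u hu

end SecCoal

theorem stmt0_general {V : Type*} [Fintype V] (G : SimpleGraph V)
    (hne : G ≠ ⊤) :
    minDeg G + 2 ≤ SEC G := by
  have hcard := minDeg_add_two_le_card hne
  have : Nonempty V := Nat.card_pos_iff.1 (by omega) |>.1
  obtain ⟨v, hv⟩ := exists_deg_eq_minDeg G
  set C := insert v (G.neighborSet v)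
  have hC : C.ncard = minDeg G + 1 := by
    rw [ncard_insert_of_notMem G.notMem_neighborSet_self, ← hv, deg]
  have hCc : Cᶜ.ncard = Nat.card V - (minDeg G + 1) := by rw [ncard_compl, hC]
  have hins (u : V) (hu : u ∈ C) : IsSecureDominating G (insert u Cᶜ) := by
    refine isSecureDominating_of_ncard_compl_le ?_
    rw [insert_eq, compl_union, compl_compl, ← sdiff_eq_compl_inter,
      ncard_sdiff_singleton_of_mem hu, hC, Nat.add_sub_cancel]
  calc minDeg G + 2 = C.ncard + 1 := by rw [hC]
    _ ≤ SEC G := ncard_add_one_le_SEC hne (insert_nonempty _ _)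
      (nonempty_of_ncard_ne_zero (by omega))
      (fun h => not_isDominating_compl_insert_neighborSet v h.1) hins

theorem stmt0 {V : Type*} [Fintype V] (G : SimpleGraph V)
    (hiso : ∀ v : V, ∃ u, G.Adj u v) (hne : G ≠ ⊤) :
    minDeg G + 2 ≤ SEC G :=
  stmt0_general G hne
end

section
/- Every finite simple graph G admits a secure coalition partition. -/
/-! If `G` is complete, the singletons form a secure coalition partition, each of them a secure
dominating set of one vertex of full degree. Otherwise no singleton is secure dominating, while
`V` is. Starting from the singletons, repeatedly merge two parts whose union is still not secure
dominating; the number of parts drops each time, so this stops. At that point the union of any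
two parts is secure dominating, and at least two parts remain, since a single part would be `V`. -/

theorem Finset.card_insert_sdiff_pair_lt {α : Type*} [DecidableEq α] {s : Finset α} {a b : α}
    (ha : a ∈ s) (hb : b ∈ s) (hab : a ≠ b) (x : α) : (insert x (s \ {a, b})).card < s.card := by
  have hsub : {a, b} ⊆ s := Finset.insert_subset ha (Finset.singleton_subset_iff.2 hb)
  have htwo : ({a, b} : Finset α).card = 2 := Finset.card_pair hab
  have := Finset.card_sdiff_of_subset hsub
  have := Finset.card_insert_le x (s \ {a, b})
  have := Finset.card_le_card hsub
  omega

namespace Setoid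

variable {α : Type*}

theorem isPartition_range_singleton : IsPartition (Set.range ({·} : α → Set α)) := by
  refine ⟨fun ⟨v, hv⟩ => Set.singleton_ne_empty v hv, fun a => ⟨{a}, ⟨⟨a, rfl⟩, rfl⟩, ?_⟩⟩
  rintro _ ⟨⟨b, rfl⟩, hab⟩
  rw [Set.mem_singleton_iff.1 hab]

theorem IsPartition.insert_union_diff_pair {c : Set (Set α)} (hc : IsPartition c)
    {A B : Set α} (hA : A ∈ c) (hB : B ∈ c) : IsPartition (insert (A ∪ B) (c \ {A, B})) := by
  refine Set.PairwiseDisjoint.isPartition_of_exists_of_ne_empty ?_ ?_ ?_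
  · refine (hc.pairwiseDisjoint.subset Set.sdiff_subset).insert fun C hC _ => ?_
    simp only [Set.mem_sdiff, Set.mem_insert_iff, Set.mem_singleton_iff, not_or] at hC
    exact Set.disjoint_union_left.2
      ⟨hc.pairwiseDisjoint hA hC.1 (Ne.symm hC.2.1), hc.pairwiseDisjoint hB hC.1 (Ne.symm hC.2.2)⟩
  · intro a
    obtain ⟨C, ⟨hC, haC⟩, -⟩ := hc.2 a
    by_cases hCAB : C = A ∨ C = B
    · refine ⟨A ∪ B, Set.mem_insert _ _, ?_⟩
      rcases hCAB with rfl | rfl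
      exacts [Or.inl haC, Or.inr haC]
    · exact ⟨C, Set.mem_insert_of_mem _ ⟨hC, by simpa using hCAB⟩, haC⟩
  · rintro (h | h)
    · exact (nonempty_of_mem_partition hc hA).ne_empty (Set.union_empty_iff.1 h.symm).1
    · exact hc.1 h.1

theorem exists_isPartition_forall_not_and_exists_union (P : Set α → Prop)
    (huniv : P Set.univ) (π₀ : Finset (Set α)) (hπ₀ : IsPartition (π₀ : Set (Set α)))
    (hπ₀P : ∀ A ∈ π₀, ¬ P A) :
    ∃ π : Finset (Set α), IsPartition (π : Set (Set α)) ∧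
      ∀ A ∈ π, ¬ P A ∧ ∃ B ∈ π, B ≠ A ∧ P (A ∪ B) := by
  classical
  by_cases hdone : ∀ A ∈ π₀, ∃ B ∈ π₀, B ≠ A ∧ P (A ∪ B)
  · exact ⟨π₀, hπ₀, fun A hA => ⟨hπ₀P A hA, hdone A hA⟩⟩
  push Not at hdone
  obtain ⟨A, hA, hAP⟩ := hdone
  obtain ⟨B, hB, hBA⟩ : ∃ B ∈ π₀, B ≠ A := by
    by_contra! hsingle
    have hAuniv : A = Set.univ := Set.eq_univ_of_forall fun a => by
      obtain ⟨C, ⟨hC, haC⟩, -⟩ := hπ₀.2 a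
      exact hsingle C hC ▸ haC
    exact hπ₀P A hA (hAuniv ▸ huniv)
  have hmerged : IsPartition ((insert (A ∪ B) (π₀ \ {A, B}) : Finset (Set α)) : Set (Set α)) := by
    simpa using hπ₀.insert_union_diff_pair hA hB
  refine exists_isPartition_forall_not_and_exists_union P huniv _ hmerged fun C hC => ?_
  rcases Finset.mem_insert.1 hC with rfl | hC
  · exact hAP B hB hBA
  · exact hπ₀P C (Finset.mem_sdiff.1 hC).1
termination_by π₀.card
decreasing_by exact Finset.card_insert_sdiff_pair_lt hA hB hBA.symm _

end Setoid

namespace SecCoal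

variable {V : Type*} {G : SimpleGraph V}

theorem isSecureDominating_univ (G : SimpleGraph V) : IsSecureDominating G Set.univ :=
  ⟨fun v hv => absurd (Set.mem_univ v) hv, fun u hu => absurd (Set.mem_univ u) hu⟩

theorem isDominating_singleton_iff_s1 {v : V} : IsDominating G {v} ↔ ∀ w ≠ v, G.Adj v w := by
  simp [IsDominating]

theorem isSecureDominating_singleton_iff {v : V} : IsSecureDominating G {v} ↔ G = ⊤ := by
  refine ⟨fun ⟨hdom, hsec⟩ => ?_, ?_⟩
  · ext x y
    rw [SimpleGraph.top_adj]
    refine ⟨G.ne_of_adj, fun hxy => ?_⟩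
    by_cases hxv : x = v
    · exact hxv ▸ isDominating_singleton_iff_s1.1 hdom y (hxv ▸ hxy.symm)
    · obtain ⟨_, rfl, -, hswap⟩ := hsec x hxv
      rw [Set.sdiff_self, Set.empty_union] at hswap
      exact isDominating_singleton_iff_s1.1 hswap y hxy.symm
  · rintro rfl
    have hdom (w : V) : IsDominating ⊤ {w} :=
      isDominating_singleton_iff_s1.2 fun _ h => (SimpleGraph.top_adj _ _).2 h.symm
    exact ⟨hdom v, fun u hu =>
      ⟨v, rfl, (SimpleGraph.top_adj _ _).2 (Ne.symm hu), by simpa using hdom u⟩⟩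

theorem deg_top [Finite V] (v : V) : deg (⊤ : SimpleGraph V) v = Nat.card V - 1 := by
  have := Set.ncard_add_ncard_compl {v}
  rw [Set.ncard_singleton] at this
  rw [deg, SimpleGraph.neighborSet_top]
  omega

end SecCoal

open SecCoal
theorem stmt1 {V : Type*} [Fintype V] (G : SimpleGraph V) :
    ∃ π : Finset (Set V), IsSecPartition G π := by
  classical
  have hsingletons : Setoid.IsPartition
      ((Finset.univ.image ({·} : V → Set V) : Finset (Set V)) : Set (Set V)) := by
    simpa using Setoid.isPartition_range_singleton
  by_cases hG : G = ⊤
  · subst hG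
    refine ⟨_, hsingletons, fun A hA => Or.inl ?_⟩
    obtain ⟨v, -, rfl⟩ := Finset.mem_image.1 hA
    exact ⟨v, rfl, deg_top v, isSecureDominating_singleton_iff.2 rfl⟩
  · obtain ⟨π, hπ, hcoal⟩ := Setoid.exists_isPartition_forall_not_and_exists_union
      (IsSecureDominating G) (isSecureDominating_univ G) _ hsingletons fun A hA => by
        obtain ⟨v, -, rfl⟩ := Finset.mem_image.1 hA
        exact mt isSecureDominating_singleton_iff.1 hG
    exact ⟨π, hπ, fun A hA => Or.inr (hcoal A hA)⟩
end

section
/- If a vertex set Z of a graph G is not a dominating set, then in any secure coalition partition π containing Z, the number of parts of π forming a secure coalition with Z is at most Δ(G)+1. -/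
/-!
Pick a vertex `v` that `Z` does not dominate. Every part `A` forming a secure coalition with `Z`
makes `Z ∪ A` dominating, so `A` must meet the closed neighbourhood `N[v]`. The parts are pairwise
disjoint, so there are at most `|N[v]| = deg v + 1 ≤ Δ(G) + 1` of them.
-/

open Set

theorem Set.ncard_le_of_pairwiseDisjoint_of_inter_nonempty {α : Type*} {s : Set (Set α)}
    {T : Set α} (hT : T.Finite) (hs : s.PairwiseDisjoint id)
    (hmeet : ∀ A ∈ s, (A ∩ T).Nonempty) : s.ncard ≤ T.ncard := by
  rcases s.eq_empty_or_nonempty with rfl | ⟨A₀, hA₀⟩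
  · simp
  have : Nonempty α := ⟨(hmeet A₀ hA₀).some⟩
  have hmeet' : ∀ A ∈ s, ∃ x, x ∈ A ∧ x ∈ T := hmeet
  choose! f hfA hfT using hmeet'
  refine ncard_le_ncard_of_injOn f hfT (fun A hA B hB hAB => ?_) hT
  exact hs.elim_set hA hB (f A) (hfA A hA) (hAB ▸ hfA B hB)

namespace SecCoal

variable {V : Type*} (G : SimpleGraph V)

theorem exists_not_adj_of_not_isDominating {Z : Set V} (hZ : ¬ IsDominating G Z) :
    ∃ v ∉ Z, ∀ u ∈ Z, ¬ G.Adj u v := by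
  simpa [IsDominating] using hZ

theorem FormsSecCoalition.isDominating_union {A B : Set V} (h : FormsSecCoalition G A B) :
    IsDominating G (A ∪ B) :=
  h.2.2.2.1

theorem inter_closedNbhd_nonempty_of_isDominating_union {Z A : Set V} {v : V} (hvZ : v ∉ Z)
    (hvN : ∀ u ∈ Z, ¬ G.Adj u v) (hdom : IsDominating G (Z ∪ A)) :
    (A ∩ insert v (G.neighborSet v)).Nonempty := by
  by_cases hvA : v ∈ A
  · exact ⟨v, hvA, mem_insert v _⟩
  obtain ⟨u, hu | hu, hadj⟩ := hdom v (by simp [hvZ, hvA])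
  · exact absurd hadj (hvN u hu)
  · exact ⟨u, hu, mem_insert_of_mem v hadj.symm⟩

theorem ncard_closedNbhd [Finite V] (v : V) :
    (insert v (G.neighborSet v)).ncard = deg G v + 1 :=
  ncard_insert_of_notMem G.notMem_neighborSet_self

theorem deg_le_maxDeg [Finite V] (v : V) : deg G v ≤ maxDeg G :=
  le_csSup (finite_range (deg G)).bddAbove ⟨v, rfl⟩

end SecCoal

open SecCoal
theorem stmt6_general {V : Type*} [Fintype V] (G : SimpleGraph V)
    (π : Finset (Set V)) (Z : Set V)
    (hπ : IsSecPartition G π) (hZd : ¬ IsDominating G Z) :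
    {A ∈ (↑π : Set (Set V)) | FormsSecCoalition G Z A}.ncard ≤ maxDeg G + 1 := by
  obtain ⟨v, hvZ, hvN⟩ := exists_not_adj_of_not_isDominating G hZd
  calc {A ∈ (↑π : Set (Set V)) | FormsSecCoalition G Z A}.ncard
      ≤ (insert v (G.neighborSet v)).ncard :=
        ncard_le_of_pairwiseDisjoint_of_inter_nonempty (toFinite _)
          (hπ.1.pairwiseDisjoint.subset (sep_subset _ _))
          fun A hA => inter_closedNbhd_nonempty_of_isDominating_union G hvZ hvN hA.2.isDominating_union
    _ = deg G v + 1 := ncard_closedNbhd G v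
    _ ≤ maxDeg G + 1 := Nat.add_le_add_right (deg_le_maxDeg G v) 1

theorem stmt6 {V : Type*} [Fintype V] (G : SimpleGraph V)
    (π : Finset (Set V)) (Z : Set V)
    (hπ : IsSecPartition G π) (hZ : Z ∈ π) (hZd : ¬ IsDominating G Z) :
    {A ∈ (↑π : Set (Set V)) | FormsSecCoalition G Z A}.ncard ≤ maxDeg G + 1 :=
  stmt6_general G π Z hπ hZd
end

section
/- For any graph G of order n, SEC(G) ≤ n − γ_s(G) + 2, where γ_s(G) is the secure domination number of G. -/
/-!
Any part of a secure coalition partition `π` is a secure dominating set `S` on its own, or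
together with one other part. These at most two parts contribute at most `2` to `#π`; the
other parts are pairwise disjoint nonempty subsets of `Sᶜ`, so there are at most
`n - |S| ≤ n - γ_s(G)` of them.
-/

open Finset

theorem Finset.card_le_ncard_of_pairwiseDisjoint {α : Type*} [Finite α] {π : Finset (Set α)}
    {T : Set α} (hdisj : (π : Set (Set α)).PairwiseDisjoint id) (hne : ∀ C ∈ π, C.Nonempty)
    (hsub : ∀ C ∈ π, C ⊆ T) : #π ≤ T.ncard := by
  choose f hf using fun C : π => hne C C.2
  rw [← Nat.card_coe_set_eq, ← Nat.card_eq_finsetCard]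
  refine Nat.card_le_card_of_injective (fun C => ⟨f C, hsub C C.2 (hf C)⟩) fun C D hCD => ?_
  have hfD : f C ∈ D.1 := by
    rw [show f C = f D from congrArg Subtype.val hCD]
    exact hf D
  exact Subtype.ext (hdisj.elim C.2 D.2 (Set.not_disjoint_iff.2 ⟨f C, hf C, hfD⟩))

theorem Setoid.IsPartition.card_sdiff_le_ncard_compl_sUnion {α : Type*} [Finite α]
    [DecidableEq (Set α)] {π σ : Finset (Set α)} (hπ : Setoid.IsPartition (π : Set (Set α)))
    (hσ : σ ⊆ π) : #(π \ σ) ≤ (⋃₀ (σ : Set (Set α)))ᶜ.ncard := by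
  have hmem : ∀ C ∈ π \ σ, C ∈ (π : Set (Set α)) := fun C hC => mem_coe.2 (mem_sdiff.1 hC).1
  refine card_le_ncard_of_pairwiseDisjoint (hπ.pairwiseDisjoint.subset hmem)
    (fun C hC => Setoid.nonempty_of_mem_partition hπ (hmem C hC)) fun C hC => ?_
  refine Set.subset_compl_iff_disjoint_right.2 (Set.disjoint_sUnion_right.2 fun D hD => ?_)
  have hCD : C ≠ D := fun h => (mem_sdiff.1 hC).2 (h ▸ hD)
  exact hπ.pairwiseDisjoint (hmem C hC) (mem_coe.2 (hσ hD)) hCD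

namespace SecCoal

theorem secDomNum_le_ncard {V : Type*} {G : SimpleGraph V} {S : Set V}
    (hS : IsSecureDominating G S) : secDomNum G ≤ S.ncard :=
  Nat.sInf_le ⟨S, hS, rfl⟩

theorem IsSecPartition.exists_subset_card_le_two_secureDominating {V : Type*}
    {G : SimpleGraph V} {π : Finset (Set V)} (hπ : IsSecPartition G π) {A : Set V} (hA : A ∈ π) :
    ∃ σ ⊆ π, #σ ≤ 2 ∧ IsSecureDominating G (⋃₀ (σ : Set (Set V))) := by
  classical
  rcases hπ.2 A hA with ⟨v, rfl, -, hsec⟩ | ⟨-, B, hB, -, hsec⟩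
  · exact ⟨{{v}}, singleton_subset_iff.2 hA, by simp, by simpa using hsec⟩
  · refine ⟨{A, B}, insert_subset hA (singleton_subset_iff.2 hB), card_le_two, ?_⟩
    simpa using hsec

end SecCoal

open SecCoal
theorem stmt7 {V : Type*} [Fintype V] (G : SimpleGraph V) :
    SEC G ≤ Fintype.card V - secDomNum G + 2 := by
  classical
  refine csSup_le' ?_
  rintro _ ⟨π, hπ, rfl⟩
  obtain rfl | ⟨A, hA⟩ := π.eq_empty_or_nonempty
  · simp
  obtain ⟨σ, hσπ, hσ, hS⟩ := hπ.exists_subset_card_le_two_secureDominating hA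
  have hrest := hπ.1.card_sdiff_le_ncard_compl_sUnion hσπ
  have hγ := secDomNum_le_ncard hS
  have hsplit := card_sdiff_add_card_eq_card hσπ
  have hcompl := Set.ncard_add_ncard_compl (⋃₀ (σ : Set (Set V)))
  rw [Nat.card_eq_fintype_card] at hcompl
  omega
end

section
/- If G is a graph of order n with minimum degree δ(G) = 0 and n ≥ 2, then SEC(G) = n if and only if G ≅ K₁ ∪ K_{n−1} (an isolated vertex together with a complete graph on n−1 vertices). -/
open SecCoal

/-!
With an isolated vertex `w` and `n ≥ 2`, no single vertex dominates, so every block of a secure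
coalition partition needs a partner. The only partition into `n` blocks is the partition into
singletons, so `SEC G = n` says that `{w, u}` is a secure dominating set for some `u`. Then `u`
dominates every vertex but `w`, and swapping `u` for any other `x ≠ w` must leave `{w, x}`
dominating, so `x` is adjacent to every vertex but `w` as well: `G` is complete on `V \ {w}`, i.e.
`G = ⊤.deleteIncidenceSet w ≃g K₁ ⊕ Kₙ₋₁`. Conversely, in that graph `{u, w}` is a secure
dominating set for every `u ≠ w`.
-/

namespace SimpleGraph

variable {V W : Type*}

lemma eq_deleteIncidenceSet_top_of_iso {G : SimpleGraph V} {x : W}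
    (φ : G ≃g (⊤ : SimpleGraph W).deleteIncidenceSet x) :
    G = (⊤ : SimpleGraph V).deleteIncidenceSet (φ.symm x) := by
  ext a b
  rw [← φ.map_adj_iff]
  simp [deleteIncidenceSet_adj, φ.eq_symm_apply]

lemma nonempty_iso_deleteIncidenceSet_top [Fintype V] [Fintype W]
    (h : Fintype.card V = Fintype.card W) (w : V) (x : W) :
    Nonempty ((⊤ : SimpleGraph V).deleteIncidenceSet w ≃g
      (⊤ : SimpleGraph W).deleteIncidenceSet x) := by
  classical
  let e := (Fintype.equivOfCardEq h).trans (Equiv.swap (Fintype.equivOfCardEq h w) x)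
  have hew : e w = x := Equiv.swap_apply_left _ _
  exact ⟨⟨e, by simp [deleteIncidenceSet_adj, ← hew]⟩⟩

lemma sum_top_eq_deleteIncidenceSet_top (m : ℕ) :
    (⊤ : SimpleGraph (Fin 1)) ⊕g (⊤ : SimpleGraph (Fin m)) =
      (⊤ : SimpleGraph (Fin 1 ⊕ Fin m)).deleteIncidenceSet (Sum.inl 0) := by
  ext (a | a) (b | b) <;> simp [deleteIncidenceSet_adj, Fin.fin_one_eq_zero]

end SimpleGraph

namespace SecCoal

variable {V : Type*}

def discretePartition (V : Type*) [Fintype V] : Finset (Set V) :=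
  Finset.univ.map ⟨fun v => {v}, Set.singleton_injective⟩

section Partition

variable [Fintype V]

@[simp]
lemma mem_discretePartition {A : Set V} : A ∈ discretePartition V ↔ ∃ v, {v} = A := by
  simp [discretePartition]

lemma card_discretePartition : (discretePartition V).card = Fintype.card V := by
  simp [discretePartition]

lemma isPartition_discretePartition :
    Setoid.IsPartition (discretePartition V : Set (Set V)) := by
  refine ⟨fun h => ?_, fun v => ⟨{v}, ⟨by simp, rfl⟩, ?_⟩⟩
  · obtain ⟨v, hv⟩ := mem_discretePartition.1 h
    exact Set.singleton_ne_empty v hv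
  · rintro A ⟨hA, hvA⟩
    obtain ⟨u, rfl⟩ := mem_discretePartition.1 hA
    simp_all

variable {π : Finset (Set V)}

lemma _root_.Setoid.IsPartition.surjOn_eqvClass (hπ : Setoid.IsPartition (π : Set (Set V))) :
    Set.SurjOn (fun y => {x | Setoid.mkClasses _ hπ.2 x y}) (Finset.univ : Finset V) π := by
  intro A hA
  obtain ⟨v, hv⟩ := Setoid.nonempty_of_mem_partition hπ hA
  exact ⟨v, Finset.mem_coe.2 (Finset.mem_univ v), (Setoid.eq_eqv_class_of_mem hπ.2 hA hv).symm⟩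

lemma _root_.Setoid.IsPartition.card_le (hπ : Setoid.IsPartition (π : Set (Set V))) :
    π.card ≤ Fintype.card V :=
  Finset.card_le_card_of_surjOn _ hπ.surjOn_eqvClass

lemma _root_.Setoid.IsPartition.eq_discretePartition_of_card_eq
    (hπ : Setoid.IsPartition (π : Set (Set V))) (h : π.card = Fintype.card V) :
    π = discretePartition V := by
  have hinj := Finset.injOn_of_surjOn_of_card_le _
    (fun _ _ => Setoid.eqv_class_mem hπ.2) hπ.surjOn_eqvClass (by simp [h])
  refine Finset.eq_of_subset_of_card_le (fun A hA => ?_) (by rw [card_discretePartition, h])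
  obtain ⟨v, hv⟩ := Setoid.nonempty_of_mem_partition hπ hA
  refine mem_discretePartition.2 ⟨v, Set.eq_of_subset_of_subset (by simpa using hv) ?_⟩
  intro x hx
  exact hinj (by simp) (by simp)
    ((Setoid.eq_eqv_class_of_mem hπ.2 hA hx).symm.trans (Setoid.eq_eqv_class_of_mem hπ.2 hA hv))

end Partition

lemma not_isDominating_singleton [Nontrivial V] {G : SimpleGraph V} {w : V}
    (hw : ∀ u, ¬ G.Adj u w) (v : V) : ¬ IsDominating G {v} := by
  intro hdom
  rcases eq_or_ne v w with rfl | hvw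
  · obtain ⟨x, hx⟩ := exists_ne v
    obtain ⟨z, rfl, hzx⟩ := hdom x hx
    exact hw x hzx.symm
  · obtain ⟨z, rfl, hzw⟩ := hdom w hvw.symm
    exact hw z hzw

open SimpleGraph in
lemma isSecureDominating_pair_deleteIncidenceSet_top {u w : V} (hu : u ≠ w) :
    IsSecureDominating ((⊤ : SimpleGraph V).deleteIncidenceSet w) ({u} ∪ {w}) := by
  refine ⟨fun x hx => ⟨u, by simp, ?_⟩,
    fun x hx => ⟨u, by simp, ?_, fun y hy => ⟨x, by simp, ?_⟩⟩⟩ <;>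
    simp only [Set.mem_union, Set.mem_sdiff, Set.mem_singleton_iff, deleteIncidenceSet_adj,
      top_adj] at * <;>
    grind

open SimpleGraph in
lemma eq_deleteIncidenceSet_top_of_isSecureDominating_pair {G : SimpleGraph V} {u w : V}
    (hw : ∀ v, ¬ G.Adj v w) (hS : IsSecureDominating G ({w} ∪ {u})) :
    G = (⊤ : SimpleGraph V).deleteIncidenceSet w := by
  have hu_adj : ∀ x ∉ ({w} ∪ {u} : Set V), G.Adj u x := by
    intro x hx
    obtain ⟨z, hz, hzx⟩ := hS.1 x hx
    rcases hz with rfl | rfl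
    · exact absurd hzx.symm (hw x)
    · exact hzx
  have hx_adj : ∀ x ∉ ({w} ∪ {u} : Set V), ∀ y, y ≠ w → y ≠ x → G.Adj x y := by
    intro x hx y hyw hyx
    obtain ⟨z, hz, hzx, hdom⟩ := hS.2 x hx
    have hzu : z = u := by
      rcases hz with rfl | rfl
      · exact absurd hzx.symm (hw x)
      · rfl
    subst z
    rcases eq_or_ne y u with rfl | hyu
    · exact (hu_adj x hx).symm
    obtain ⟨z', hz', hz'y⟩ := hdom y (by simp [hyw, hyu, hyx])
    simp only [Set.mem_union, Set.mem_sdiff, Set.mem_singleton_iff] at hz'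
    rcases hz' with ⟨rfl | rfl, hz'z⟩ | rfl
    · exact absurd hz'y.symm (hw y)
    · exact absurd rfl hz'z
    · exact hz'y
  ext a b
  simp only [deleteIncidenceSet_adj, top_adj]
  refine ⟨fun h => ⟨G.ne_of_adj h, fun ha => hw b (ha ▸ h.symm), fun hb => hw a (hb ▸ h)⟩, ?_⟩
  rintro ⟨hab, haw, hbw⟩
  rcases eq_or_ne a u with rfl | hau
  · exact hu_adj b (by simp [hbw, hab.symm])
  · exact hx_adj a (by simp [haw, hau]) b hbw hab.symm

variable [Fintype V]

lemma isSecPartition_discretePartition [Nontrivial V] (w : V) :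
    IsSecPartition ((⊤ : SimpleGraph V).deleteIncidenceSet w) (discretePartition V) := by
  refine ⟨isPartition_discretePartition, ?_⟩
  simp only [mem_discretePartition, forall_exists_index]
  rintro A v rfl
  have hw : ∀ u, ¬ ((⊤ : SimpleGraph V).deleteIncidenceSet w).Adj u w := by
    simp [SimpleGraph.deleteIncidenceSet_adj]
  refine Or.inr ⟨fun h => not_isDominating_singleton hw v h.1, ?_⟩
  obtain ⟨u, huv, hSec⟩ : ∃ u, u ≠ v ∧
      IsSecureDominating ((⊤ : SimpleGraph V).deleteIncidenceSet w) ({v} ∪ {u}) := by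
    rcases eq_or_ne v w with rfl | hvw
    · obtain ⟨u, hu⟩ := exists_ne v
      exact ⟨u, hu, Set.union_comm {u} {v} ▸ isSecureDominating_pair_deleteIncidenceSet_top hu⟩
    · exact ⟨w, hvw.symm, isSecureDominating_pair_deleteIncidenceSet_top hvw⟩
  exact ⟨{u}, ⟨u, rfl⟩, by simpa using huv, hSec⟩

lemma eq_deleteIncidenceSet_top_of_isSecPartition [Nontrivial V] {G : SimpleGraph V} {w : V}
    (hw : ∀ u, ¬ G.Adj u w) (h : IsSecPartition G (discretePartition V)) :
    G = (⊤ : SimpleGraph V).deleteIncidenceSet w := by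
  rcases h.2 {w} (mem_discretePartition.2 ⟨w, rfl⟩) with ⟨v, hv, -, hSec⟩ | ⟨-, B, hB, -, hSec⟩
  · exact absurd (hv ▸ hSec.1) (not_isDominating_singleton hw v)
  · obtain ⟨u, rfl⟩ := mem_discretePartition.1 hB
    exact eq_deleteIncidenceSet_top_of_isSecureDominating_pair hw hSec

lemma SEC_eq_card_iff [Nonempty V] (G : SimpleGraph V) :
    SEC G = Fintype.card V ↔ IsSecPartition G (discretePartition V) := by
  set K := {k | ∃ π : Finset (Set V), IsSecPartition G π ∧ π.card = k}
  have hbdd : ∀ k ∈ K, k ≤ Fintype.card V := by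
    rintro _ ⟨π, hπ, rfl⟩
    exact hπ.1.card_le
  constructor
  · intro h
    replace h : sSup K = Fintype.card V := h
    have hne : K.Nonempty := Set.nonempty_iff_ne_empty.2 fun hK =>
      Fintype.card_ne_zero (α := V) (by simpa [hK] using h.symm)
    obtain ⟨π, hπ, hcard⟩ : Fintype.card V ∈ K := h ▸ Nat.sSup_mem hne ⟨_, hbdd⟩
    rwa [← hπ.1.eq_discretePartition_of_card_eq hcard]
  · intro h
    have hmem : Fintype.card V ∈ K := ⟨_, h, card_discretePartition⟩
    exact le_antisymm (csSup_le ⟨_, hmem⟩ hbdd) (le_csSup ⟨_, hbdd⟩ hmem)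

end SecCoal

theorem stmt11 {V : Type*} [Fintype V] (G : SimpleGraph V)
    (hn : 2 ≤ Fintype.card V) (hδ : ∃ v : V, ∀ u, ¬ G.Adj u v) :
    SEC G = Fintype.card V ↔
      Nonempty (G ≃g ((⊤ : SimpleGraph (Fin 1)) ⊕g
        (⊤ : SimpleGraph (Fin (Fintype.card V - 1))))) := by
  obtain ⟨w, hw⟩ := hδ
  have : Nontrivial V := Fintype.one_lt_card_iff_nontrivial.1 hn
  rw [SEC_eq_card_iff, SimpleGraph.sum_top_eq_deleteIncidenceSet_top]
  constructor
  · intro h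
    rw [eq_deleteIncidenceSet_top_of_isSecPartition hw h]
    exact SimpleGraph.nonempty_iso_deleteIncidenceSet_top
      (by simp only [Fintype.card_sum, Fintype.card_fin]; omega) w _
  · rintro ⟨φ⟩
    rw [SimpleGraph.eq_deleteIncidenceSet_top_of_iso φ]
    exact isSecPartition_discretePartition _
end

section
/- For any tree T of order n, SEC(T) = n if and only if T is isomorphic to the path P_n with n ≤ 4. -/
open SecCoal SimpleGraph

namespace Setoid.IsPartition

variable {α : Type*} [Fintype α] {c : Finset (Set α)}

lemma exists_map_to_parts (hc : IsPartition (c : Set (Set α))) [DecidableEq (Set α)] :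
    ∃ f : α → Set α, (∀ a, ∀ A ∈ c, a ∈ A → A = f a) ∧ c ⊆ Finset.univ.image f := by
  choose f hfc hmem using fun a => (hc.2 a).exists
  have huniq : ∀ a, ∀ A ∈ c, a ∈ A → A = f a := fun a A hA haA =>
    eq_of_mem_eqv_class hc.2 (Finset.mem_coe.2 hA) haA (hfc a) (hmem a)
  refine ⟨f, huniq, fun A hA => ?_⟩
  obtain ⟨a, ha⟩ := nonempty_of_mem_partition hc (Finset.mem_coe.2 hA)
  exact Finset.mem_image.2 ⟨a, Finset.mem_univ a, (huniq a A hA ha).symm⟩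

lemma card_le_s12 (hc : IsPartition (c : Set (Set α))) : c.card ≤ Fintype.card α := by
  classical
  obtain ⟨f, -, hsub⟩ := hc.exists_map_to_parts
  exact (Finset.card_le_card hsub).trans Finset.card_image_le

lemma exists_eq_singleton_of_card_eq (hc : IsPartition (c : Set (Set α)))
    (hcard : c.card = Fintype.card α) {A : Set α} (hA : A ∈ c) : ∃ a, A = {a} := by
  classical
  obtain ⟨f, huniq, hsub⟩ := hc.exists_map_to_parts
  have himage : c = Finset.univ.image f :=
    Finset.eq_of_subset_of_card_le hsub (Finset.card_image_le.trans hcard.ge)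
  have hinj : Set.InjOn f (Finset.univ : Finset α) := Finset.card_image_iff.1 (himage ▸ hcard)
  obtain ⟨a, ha⟩ := nonempty_of_mem_partition hc (Finset.mem_coe.2 hA)
  refine ⟨a, Set.eq_singleton_iff_unique_mem.2 ⟨ha, fun b hb => ?_⟩⟩
  exact hinj (Finset.mem_coe.2 (Finset.mem_univ b)) (Finset.mem_coe.2 (Finset.mem_univ a))
    ((huniq b A hA hb).symm.trans (huniq a A hA ha))

end Setoid.IsPartition

namespace SimpleGraph

variable {V W : Type*} {G : SimpleGraph V}

lemma IsAcyclic.commonNeighbors_subsingleton (hG : G.IsAcyclic) {u v : V} (huv : u ≠ v) :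
    (G.commonNeighbors u v).Subsingleton := by
  intro c hc c' hc'
  rw [mem_commonNeighbors] at hc hc'
  let p (d : V) (hd : G.Adj u d ∧ G.Adj v d) : G.Path u v :=
    ⟨.cons hd.1 (.cons hd.2.symm .nil), by simp [Walk.isPath_def, huv, hd.1.ne, hd.2.ne.symm]⟩
  have := (hG.subsingleton_path u v).elim (p c hc) (p c' hc')
  simpa [p] using congrArg (fun q : G.Path u v => q.1.support) this

lemma exists_ne_not_adj_of_cliqueFree_three [Fintype V] (hG : G.CliqueFree 3)
    (h : 2 < Fintype.card V) : ∃ x y : V, x ≠ y ∧ ¬G.Adj x y := by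
  obtain ⟨a, b, c, hab, hac, hbc⟩ := Fintype.two_lt_card_iff.1 h
  by_contra! hadj
  exact G.isIndepSet_neighborSet_of_triangleFree hG a (hadj a b hab) (hadj a c hac) hbc
    (hadj b c hbc)

/-- Trees are minimally connected, so the image of `H` is all of `G`. -/
lemma IsTree.nonempty_iso_of_copy [Finite V] {H : SimpleGraph W} (hG : G.IsTree)
    (hH : H.Connected) (f : Copy H G) (hcard : Nat.card V ≤ Nat.card W) :
    Nonempty (H ≃g G) := by
  have : Finite W := Finite.of_injective f f.injective
  let e := Equiv.ofBijective f (f.injective.bijective_of_nat_card_le hcard)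
  have hle : H.map e.toEmbedding ≤ G := by
    rintro _ _ ⟨-, a, b, hab, rfl, rfl⟩
    exact f.toHom.map_adj hab
  have heq := (isTree_iff_minimal_connected.1 hG).eq_of_le ((Iso.map e H).connected_iff.1 hH) hle
  exact ⟨heq ▸ Iso.map e H⟩

lemma IsTree.nonempty_iso_pathGraph_of_card_le_dist [Fintype V] (hG : G.IsTree) {x y : V}
    (h : Fintype.card V ≤ G.dist x y + 1) : Nonempty (G ≃g pathGraph (Fintype.card V)) := by
  classical
  obtain ⟨p, hp, hlen⟩ := hG.connected.exists_path_of_dist x y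
  have hcard : p.length + 1 = Fintype.card V := le_antisymm hp.length_lt (hlen ▸ h)
  obtain ⟨e⟩ := hG.nonempty_iso_of_copy (pathGraph_connected _) hp.pathGraphCopy
    (by simp [hcard])
  exact ⟨hcard ▸ e.symm⟩

lemma IsTree.exists_card_le_dist_add_one_of_card_le_three [Fintype V] (hG : G.IsTree)
    (h3 : Fintype.card V ≤ 3) : ∃ x y : V, Fintype.card V ≤ G.dist x y + 1 := by
  have : Nonempty V := hG.connected.nonempty
  obtain h1 | h2 | h3 : Fintype.card V ≤ 1 ∨ Fintype.card V = 2 ∨ 2 < Fintype.card V := by omega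
  · obtain ⟨v⟩ := this
    exact ⟨v, v, by omega⟩
  · obtain ⟨x, y, hxy⟩ := Fintype.exists_pair_of_one_lt_card (by omega : 1 < Fintype.card V)
    exact ⟨x, y, by have := hG.connected.pos_dist_of_ne hxy; omega⟩
  · obtain ⟨x, y, hxy, hadj⟩ :=
      exists_ne_not_adj_of_cliqueFree_three (hG.isAcyclic.cliqueFree le_rfl) h3
    exact ⟨x, y, by have := hG.connected.one_lt_dist_of_ne_of_not_adj hxy hadj; omega⟩

end SimpleGraph

namespace SecCoal

variable {V W : Type*} {G : SimpleGraph V} {H : SimpleGraph W} {u v : V}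

lemma IsDominating.image (e : G ≃g H) {D : Set V} (h : IsDominating G D) :
    IsDominating H (e '' D) := by
  intro w hw
  obtain ⟨u, hu, huw⟩ := h (e.symm w) fun h' => hw ⟨_, h', e.apply_symm_apply w⟩
  exact ⟨e u, Set.mem_image_of_mem e hu, by simpa using e.map_adj_iff.2 huw⟩

lemma IsSecureDominating.image (e : G ≃g H) {S : Set V} (h : IsSecureDominating G S) :
    IsSecureDominating H (e '' S) := by
  refine ⟨h.1.image e, fun u hu => ?_⟩
  obtain ⟨v, hv, hvu, hdom⟩ := h.2 (e.symm u) fun h' => hu ⟨_, h', e.apply_symm_apply u⟩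
  refine ⟨e v, Set.mem_image_of_mem e hv, by simpa using e.map_adj_iff.2 hvu, ?_⟩
  have := hdom.image e
  rwa [Set.image_union, Set.image_sdiff e.injective, Set.image_singleton, Set.image_singleton,
    e.apply_symm_apply] at this

lemma IsDominating.deg_eq_card_sub_one [Finite V] (h : IsDominating G {v}) :
    deg G v = Nat.card V - 1 := by
  have hnbr : G.neighborSet v = {v}ᶜ := by
    ext w
    refine ⟨fun hvw => (G.ne_of_adj hvw).symm, fun hw => ?_⟩
    obtain ⟨u, rfl, hu⟩ := h w hw
    exact hu
  have := Set.ncard_add_ncard_compl ({v} : Set V)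
  rw [Set.ncard_singleton] at this
  rw [deg, hnbr]
  omega

section SecureCoalitionNumber

variable [Fintype V]

lemma isSecPartition_singletons
    (h : ∀ v, IsSecureDominating G {v} ∨ ∃ w, w ≠ v ∧ IsSecureDominating G {v, w}) :
    IsSecPartition G (Finset.univ.image fun v => ({v} : Set V)) := by
  have hmem : ∀ A, A ∈ Finset.univ.image (fun v => ({v} : Set V)) ↔ ∃ v, A = {v} := by
    simp [eq_comm]
  refine ⟨⟨fun h0 => ?_, fun a => ⟨{a}, ⟨(hmem _).2 ⟨a, rfl⟩, rfl⟩, ?_⟩⟩, fun A hA => ?_⟩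
  · obtain ⟨v, hv⟩ := (hmem ∅).1 h0
    exact Set.singleton_ne_empty v hv.symm
  · rintro B ⟨hB, haB⟩
    obtain ⟨v, rfl⟩ := (hmem B).1 hB
    rw [Set.mem_singleton_iff.1 haB]
  · obtain ⟨v, rfl⟩ := (hmem A).1 hA
    by_cases hv : IsSecureDominating G {v}
    · exact Or.inl ⟨v, rfl, hv.1.deg_eq_card_sub_one.trans (by rw [Nat.card_eq_fintype_card]), hv⟩
    · obtain ⟨w, hwv, hw⟩ := (h v).resolve_left hv
      refine Or.inr ⟨hv, {w}, (hmem _).2 ⟨w, rfl⟩, fun hwv' => hwv ?_, ?_⟩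
      · exact Set.singleton_injective hwv'
      · rwa [Set.singleton_union]

lemma sec_eq_card_iff [Nonempty V] :
    SEC G = Fintype.card V ↔
      ∀ v, IsSecureDominating G {v} ∨ ∃ w, w ≠ v ∧ IsSecureDominating G {v, w} := by
  classical
  set K := {k | ∃ π : Finset (Set V), IsSecPartition G π ∧ π.card = k}
  have hbdd : BddAbove K := ⟨Fintype.card V, by rintro _ ⟨π, hπ, rfl⟩; exact hπ.1.card_le_s12⟩
  constructor
  · intro hsec v
    have hK : K.Nonempty := by
      by_contra hK
      rw [Set.not_nonempty_iff_eq_empty] at hK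
      have : SEC G = 0 := by
        change sSup K = 0
        rw [hK, csSup_empty]; rfl
      exact Fintype.card_ne_zero (this ▸ hsec).symm
    obtain ⟨π, hπ, hcard⟩ : Fintype.card V ∈ K := hsec ▸ Nat.sSup_mem hK hbdd
    have hsingle := fun {A} => hπ.1.exists_eq_singleton_of_card_eq hcard (A := A)
    have hv : {v} ∈ π := by
      obtain ⟨A, ⟨hA, hvA⟩, -⟩ := hπ.1.2 v
      obtain ⟨a, rfl⟩ := hsingle hA
      rwa [Set.mem_singleton_iff.1 hvA]
    rcases hπ.2 _ hv with ⟨x, -, -, hx⟩ | ⟨-, B, hB, hBv, hvB⟩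
    · exact Or.inl hx
    · obtain ⟨w, rfl⟩ := hsingle hB
      exact Or.inr ⟨w, fun hwv => hBv (hwv ▸ rfl), by rwa [Set.singleton_union] at hvB⟩
  · intro h
    refine le_antisymm (csSup_le' fun _ ⟨π, hπ, hcard⟩ => hcard ▸ hπ.1.card_le_s12) ?_
    refine le_csSup hbdd ⟨_, isSecPartition_singletons h, ?_⟩
    rw [Finset.card_image_of_injective _ Set.singleton_injective, Finset.card_univ]

end SecureCoalitionNumber

/-- A neighbour `y` of the swap partner `s` dominated after the swap only by `x` would close the
triangle `s x y`. -/
lemma IsSecureDominating.exists_swap (hG : G.CliqueFree 3) {S : Set V}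
    (hS : IsSecureDominating G S) {x : V} (hx : x ∉ S) :
    ∃ s ∈ S, G.Adj s x ∧ ∀ y ∉ S, y ≠ x → G.Adj s y → ∃ t ∈ S, t ≠ s ∧ G.Adj t y := by
  obtain ⟨s, hs, hsx, hdom⟩ := hS.2 x hx
  refine ⟨s, hs, hsx, fun y hy hyx hsy => ?_⟩
  obtain ⟨t, ht, hty⟩ := hdom y (by simp [hy, hyx])
  rcases ht with ⟨htS, hts⟩ | rfl
  · exact ⟨t, htS, hts, hty⟩
  · exact absurd hty (G.isIndepSet_neighborSet_of_triangleFree hG s hsx hsy hyx.symm)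

lemma card_le_two_of_isSecureDominating_singleton [Finite V] (hG : G.CliqueFree 3)
    (h : IsSecureDominating G {v}) : Nat.card V ≤ 2 := by
  have hsub : ({v}ᶜ : Set V).Subsingleton := by
    intro x hx y hy
    by_contra hxy
    obtain ⟨s, hs, -, hswap⟩ := h.exists_swap hG hx
    obtain ⟨u, hu, huy⟩ := h.1 y hy
    rw [Set.mem_singleton_iff] at hs hu
    subst hs hu
    obtain ⟨t, ht, hts, -⟩ := hswap y hy (Ne.symm hxy) huy
    exact hts ht
  have := Set.ncard_add_ncard_compl ({v} : Set V)
  rw [Set.ncard_singleton] at this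
  have := Set.ncard_le_one_iff_subsingleton.2 hsub
  omega

/-- The external private neighbours of `u` with respect to the pair `{u, v}`. -/
def privateNeighbors (G : SimpleGraph V) (u v : V) : Set V :=
  {y | G.Adj u y ∧ ¬G.Adj v y ∧ y ≠ v}

lemma card_le_of_isDominating_pair [Finite V] (h : IsDominating G {u, v}) :
    Nat.card V ≤ 2 + (privateNeighbors G u v).ncard + (privateNeighbors G v u).ncard +
      (G.commonNeighbors u v).ncard := by
  have hcover : Set.univ ⊆ {u, v} ∪ privateNeighbors G u v ∪ privateNeighbors G v u ∪
      G.commonNeighbors u v := by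
    intro y _
    by_cases hy : y ∈ ({u, v} : Set V)
    · exact Or.inl (Or.inl (Or.inl hy))
    obtain ⟨s, hs, hsy⟩ := h y hy
    simp only [Set.mem_insert_iff, Set.mem_singleton_iff, not_or] at hs hy
    simp only [privateNeighbors, Set.mem_union, Set.mem_ofPred_eq, mem_commonNeighbors]
    rcases hs with rfl | rfl <;> tauto
  calc Nat.card V = (Set.univ : Set V).ncard := (Set.ncard_univ V).symm
    _ ≤ _ := Set.ncard_le_ncard hcover
    _ ≤ _ := by
      grw [Set.ncard_union_le, Set.ncard_union_le, Set.ncard_union_le, Set.ncard_insert_le,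
        Set.ncard_singleton]

lemma privateNeighbors_subsingleton (hG : G.CliqueFree 3) (h : IsSecureDominating G {u, v}) :
    (privateNeighbors G u v).Subsingleton := by
  rintro a ⟨hua, hva, hav⟩ b ⟨hub, hvb, hbv⟩
  by_contra hab
  have hnot : ∀ y, G.Adj u y → y ≠ v → y ∉ ({u, v} : Set V) := by
    rintro y huy hyv (rfl | rfl)
    exacts [G.loopless.irrefl _ huy, hyv rfl]
  obtain ⟨s, hs, hsa, hswap⟩ := h.exists_swap hG (hnot a hua hav)
  obtain rfl | rfl := hs
  · obtain ⟨t, ht, hts, htb⟩ := hswap b (hnot b hub hbv) (Ne.symm hab) hub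
    obtain rfl | rfl := ht
    exacts [hts rfl, hvb htb]
  · exact hva hsa

lemma privateNeighbors_eq_empty_or (hG : G.CliqueFree 3) (h : IsSecureDominating G {u, v})
    {c : V} (hc : c ∈ G.commonNeighbors u v) :
    privateNeighbors G u v = ∅ ∨ privateNeighbors G v u = ∅ := by
  rw [mem_commonNeighbors] at hc
  have hcS : c ∉ ({u, v} : Set V) := by
    rintro (rfl | rfl)
    exacts [G.loopless.irrefl _ hc.1, G.loopless.irrefl _ hc.2]
  obtain ⟨s, hs, -, hswap⟩ := h.exists_swap hG hcS
  have hout : ∀ y ∈ privateNeighbors G u v ∪ privateNeighbors G v u,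
      y ∉ ({u, v} : Set V) ∧ y ≠ c := by
    rintro y (⟨huy, hvy, hyv⟩ | ⟨hvy, huy, hyu⟩)
    · exact ⟨by rintro (rfl | rfl) <;> simp_all, by rintro rfl; exact hvy hc.2⟩
    · exact ⟨by rintro (rfl | rfl) <;> simp_all, by rintro rfl; exact huy hc.1⟩
  rcases hs with rfl | rfl
  · refine Or.inl (Set.eq_empty_of_forall_notMem fun a ha => ?_)
    obtain ⟨t, ht, hts, hta⟩ := hswap a (hout a (Or.inl ha)).1 (hout a (Or.inl ha)).2 ha.1
    rcases ht with rfl | rfl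
    exacts [hts rfl, ha.2.1 hta]
  · refine Or.inr (Set.eq_empty_of_forall_notMem fun a ha => ?_)
    obtain ⟨t, ht, hts, hta⟩ := hswap a (hout a (Or.inr ha)).1 (hout a (Or.inr ha)).2 ha.1
    rcases ht with rfl | rfl
    exacts [ha.2.1 hta, hts rfl]

lemma two_lt_edist_of_privateNeighbors_eq_empty (hG : G.CliqueFree 3) {c b : V}
    (hc : c ∈ G.commonNeighbors u v) (hu : privateNeighbors G u v = ∅)
    (hb : b ∈ privateNeighbors G v u) : 2 < G.edist u b := by
  obtain ⟨hvb, hub, hbu⟩ := hb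
  rw [mem_commonNeighbors] at hc
  refine two_lt_edist_iff.2 ⟨hbu.symm, hub, Set.eq_empty_of_forall_notMem fun z hz => ?_⟩
  obtain ⟨huz, hbz⟩ := G.mem_commonNeighbors.1 hz
  by_cases hzv : z = v
  · subst hzv
    exact G.isIndepSet_neighborSet_of_triangleFree hG u huz hc.1 hc.2.ne hc.2
  · have hvz : G.Adj v z := by
      by_contra hvz
      exact (Set.eq_empty_iff_forall_notMem.1 hu) z ⟨huz, hvz, hzv⟩
    exact G.isIndepSet_neighborSet_of_triangleFree hG v hvz hvb hbz.ne' hbz.symm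

lemma two_lt_edist_of_adj_of_mem_privateNeighbors (hG : G.IsAcyclic)
    (hdom : IsDominating G {u, v}) (huv : G.Adj u v) {a b : V}
    (ha : a ∈ privateNeighbors G u v) (hb : b ∈ privateNeighbors G v u) :
    2 < G.edist a b := by
  obtain ⟨hua, hva, hav⟩ := ha
  obtain ⟨hvb, hub, hbu⟩ := hb
  have hG3 := hG.cliqueFree le_rfl
  -- otherwise `u` and `b` would be two common neighbours of `a` and `v`
  have hab : ¬G.Adj a b := fun hab => hbu <| Eq.symm <| hG.commonNeighbors_subsingleton hav
    (G.mem_commonNeighbors.2 ⟨hua.symm, huv.symm⟩) (G.mem_commonNeighbors.2 ⟨hab, hvb⟩)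
  refine two_lt_edist_iff.2 ⟨fun h => hva (h ▸ hvb), hab, ?_⟩
  refine Set.eq_empty_of_forall_notMem fun z hz => ?_
  obtain ⟨haz, hbz⟩ := G.mem_commonNeighbors.1 hz
  obtain ⟨s, hs, hsz⟩ := hdom z (by rintro (rfl | rfl); exacts [hub hbz.symm, hva haz.symm])
  obtain rfl | rfl := hs
  · exact G.isIndepSet_neighborSet_of_triangleFree hG3 s hua hsz haz.ne haz
  · exact G.isIndepSet_neighborSet_of_triangleFree hG3 s hvb hsz hbz.ne hbz

lemma card_le_four_of_isSecureDominating_pair [Finite V] (hT : G.IsTree) (huv : u ≠ v)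
    (h : IsSecureDominating G {u, v}) : Nat.card V ≤ 4 := by
  have hG := hT.isAcyclic.cliqueFree le_rfl
  have hcard := card_le_of_isDominating_pair h.1
  have hC := Set.ncard_le_one_iff_subsingleton.2 (hT.isAcyclic.commonNeighbors_subsingleton huv)
  have hu := Set.ncard_le_one_iff_subsingleton.2 (privateNeighbors_subsingleton hG h)
  have hv := Set.ncard_le_one_iff_subsingleton.2
    (privateNeighbors_subsingleton hG (Set.pair_comm u v ▸ h))
  rcases (G.commonNeighbors u v).eq_empty_or_nonempty with hC0 | ⟨c, hc⟩
  · rw [hC0, Set.ncard_empty] at hcard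
    omega
  · rcases privateNeighbors_eq_empty_or hG h hc with h0 | h0 <;>
      rw [h0, Set.ncard_empty] at hcard <;> omega

lemma exists_two_lt_dist_of_isSecureDominating_pair [Finite V] (hT : G.IsTree) (huv : u ≠ v)
    (h : IsSecureDominating G {u, v}) (h4 : Nat.card V = 4) : ∃ x y : V, 2 < G.dist x y := by
  suffices ∃ x y : V, 2 < G.edist x y by
    obtain ⟨x, y, hxy⟩ := this
    rw [← (hT.connected.preconnected x y).coe_dist_eq_edist] at hxy
    exact ⟨x, y, by exact_mod_cast hxy⟩
  have hG := hT.isAcyclic.cliqueFree le_rfl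
  have hcard := card_le_of_isDominating_pair h.1
  have hC := Set.ncard_le_one_iff_subsingleton.2 (hT.isAcyclic.commonNeighbors_subsingleton huv)
  have hu := Set.ncard_le_one_iff_subsingleton.2 (privateNeighbors_subsingleton hG h)
  have hv := Set.ncard_le_one_iff_subsingleton.2
    (privateNeighbors_subsingleton hG (Set.pair_comm u v ▸ h))
  have hne : ∀ {a b}, (privateNeighbors G a b).ncard = 1 → (privateNeighbors G a b).Nonempty :=
    fun h1 => Set.nonempty_of_ncard_ne_zero (by omega)
  rcases (G.commonNeighbors u v).eq_empty_or_nonempty with hC0 | ⟨c, hc⟩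
  · rw [hC0, Set.ncard_empty] at hcard
    by_cases hadj : G.Adj u v
    · obtain ⟨a, ha⟩ := hne (by omega : (privateNeighbors G u v).ncard = 1)
      obtain ⟨b, hb⟩ := hne (by omega : (privateNeighbors G v u).ncard = 1)
      exact ⟨a, b, two_lt_edist_of_adj_of_mem_privateNeighbors hT.isAcyclic h.1 hadj ha hb⟩
    · exact ⟨u, v, two_lt_edist_iff.2 ⟨huv, hadj, hC0⟩⟩
  · rcases privateNeighbors_eq_empty_or hG h hc with h0 | h0 <;>
      rw [h0, Set.ncard_empty] at hcard
    · obtain ⟨b, hb⟩ := hne (by omega : (privateNeighbors G v u).ncard = 1)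
      exact ⟨u, b, two_lt_edist_of_privateNeighbors_eq_empty hG hc h0 hb⟩
    · obtain ⟨a, ha⟩ := hne (by omega : (privateNeighbors G u v).ncard = 1)
      exact ⟨v, a, two_lt_edist_of_privateNeighbors_eq_empty hG
        (G.commonNeighbors_symm u v ▸ hc) h0 ha⟩

-- The unfolded statement nests too many quantifiers for the default instance size limit.
set_option synthInstance.maxSize 2000 in
lemma pathGraph_isSecureDominating_singleton_or_pair {n : ℕ} (hn : n ≤ 4) (v : Fin n) :
    IsSecureDominating (pathGraph n) {v} ∨
      ∃ w, w ≠ v ∧ IsSecureDominating (pathGraph n) {v, w} := by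
  revert v
  simp only [IsSecureDominating, IsDominating, Set.mem_insert_iff, Set.mem_singleton_iff,
    Set.mem_union, Set.mem_sdiff, pathGraph_adj]
  interval_cases n <;> decide

end SecCoal

open SecCoal
theorem stmt12 {V : Type*} [Fintype V] (T : SimpleGraph V) (hT : T.IsTree) :
    SEC T = Fintype.card V ↔
      (Fintype.card V ≤ 4 ∧
        Nonempty (T ≃g SimpleGraph.pathGraph (Fintype.card V))) := by
  have : Nonempty V := hT.connected.nonempty
  have hcard : Nat.card V = Fintype.card V := Nat.card_eq_fintype_card
  rw [sec_eq_card_iff]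
  constructor
  · intro hpair
    by_cases h3 : Fintype.card V ≤ 3
    · obtain ⟨x, y, hxy⟩ := hT.exists_card_le_dist_add_one_of_card_le_three h3
      exact ⟨by omega, hT.nonempty_iso_pathGraph_of_card_le_dist hxy⟩
    obtain ⟨v⟩ := this
    obtain ⟨w, hwv, hvw⟩ := (hpair v).resolve_left fun hv => by
      have := card_le_two_of_isSecureDominating_singleton (hT.isAcyclic.cliqueFree le_rfl) hv
      omega
    have h4 : Fintype.card V = 4 := by
      have := card_le_four_of_isSecureDominating_pair hT hwv.symm hvw
      omega
    obtain ⟨x, y, hxy⟩ :=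
      exists_two_lt_dist_of_isSecureDominating_pair hT hwv.symm hvw (by omega)
    exact ⟨h4.le, hT.nonempty_iso_pathGraph_of_card_le_dist (x := x) (y := y) (by omega)⟩
  · rintro ⟨h4, ⟨e⟩⟩ v
    rcases pathGraph_isSecureDominating_singleton_or_pair h4 (e v) with hv | ⟨w, hwv, hvw⟩
    · left
      simpa using hv.image e.symm
    · right
      refine ⟨e.symm w, fun h => hwv (by simp [← h]), ?_⟩
      simpa [Set.image_insert_eq] using hvw.image e.symm
end

section
/- For every graph G with no isolated vertices, there exists a graph H and a secure coalition partition π of H such that the secure coalition graph SCG(H, π) is isomorphic to G. -/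
open SecCoal

/-!
The graph `H` is a disjoint union of cliques, one for each non-edge `s` of `G`, loops `s(v, v)`
included. The clique of `s` has one vertex owned by each vertex of `G` outside `s`, and the part
of `m` is the set of vertices owned by `m`. In a disjoint union of cliques a set is secure
dominating iff it meets every clique, so the union of the parts of `i` and `j` is secure
dominating iff no non-edge contains both `i` and `j`, that is, iff `i` and `j` are adjacent
(a neighbour of `i` owns a vertex in the clique of `s(i, j)`, so that clique is never empty).
In particular no single part is secure dominating, as `s(i, i)` is a non-edge.
-/

namespace SecCoal

section CliqueUnion

variable {W C : Type*}

def cliqueUnion (f : W → C) : SimpleGraph W where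
  Adj x y := f x = f y ∧ x ≠ y
  symm := ⟨fun _ _ h => ⟨h.1.symm, h.2.symm⟩⟩
  loopless := ⟨fun _ h => h.2 rfl⟩

theorem isSecureDominating_cliqueUnion_iff (f : W → C) (S : Set W) :
    IsSecureDominating (cliqueUnion f) S ↔ ∀ x, ∃ y ∈ S, f y = f x := by
  have dominating (h : ∀ x, ∃ y ∈ S, f y = f x) (T : Set W) (hT : ∀ x, ∃ y ∈ T, f y = f x) :
      IsDominating (cliqueUnion f) T := fun x hx => by
    obtain ⟨y, hyT, hy⟩ := hT x
    exact ⟨y, hyT, hy, fun e => hx (e ▸ hyT)⟩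
  refine ⟨fun h x => ?_, fun h => ⟨dominating h S h, fun u hu => ?_⟩⟩
  · by_cases hx : x ∈ S
    · exact ⟨x, hx, rfl⟩
    · obtain ⟨y, hyS, hy, -⟩ := h.1 x hx
      exact ⟨y, hyS, hy⟩
  · obtain ⟨v, hvS, hv⟩ := h u
    refine ⟨v, hvS, ⟨hv, fun e => hu (e ▸ hvS)⟩, dominating h _ fun x => ?_⟩
    -- swapping `u` in for `v` keeps every clique met, since `u` lies in the clique of `v`
    obtain ⟨z, hzS, hz⟩ := h x
    by_cases hzv : z = v
    · exact ⟨u, Or.inr rfl, by rw [← hv, ← hzv, hz]⟩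
    · exact ⟨z, Or.inl ⟨hzS, hzv⟩, hz⟩

end CliqueUnion

theorem isPartition_range_preimage_singleton {α β : Type*} {f : α → β}
    (hf : Function.Surjective f) : Setoid.IsPartition (Set.range fun b => f ⁻¹' {b}) := by
  refine ⟨fun ⟨b, hb⟩ => ?_, fun a => ⟨f ⁻¹' {f a}, ⟨⟨f a, rfl⟩, rfl⟩, ?_⟩⟩
  · obtain ⟨a, rfl⟩ := hf b
    exact (hb ▸ rfl : a ∈ (∅ : Set α))
  · rintro _ ⟨⟨b, rfl⟩, hab⟩
    simp_all

section Construction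

variable {V : Type*} (G : SimpleGraph V)

def Token := {p : (G.edgeSetᶜ : Set (Sym2 V)) × V // p.2 ∉ p.1.1}

def tokenGraph : SimpleGraph (Token G) := cliqueUnion fun x => x.1.1

def owner (x : Token G) : V := x.1.2

instance [Finite V] : Finite (Token G) := by
  unfold Token
  infer_instance

open Classical in
noncomputable def ownerPartition [Fintype V] : Finset (Set (Token G)) :=
  Finset.univ.image fun m => owner G ⁻¹' {m}

variable {G}

theorem owner_surjective (hiso : ∀ v, ∃ u, G.Adj u v) : Function.Surjective (owner G) := by
  intro m
  obtain ⟨u, hu⟩ := hiso m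
  exact ⟨⟨(⟨s(u, u), G.not_mem_edgeSet_of_isDiag rfl⟩, m), by simpa using hu.ne.symm⟩, rfl⟩

theorem isSecureDominating_owner_preimage_pair_iff (hiso : ∀ v, ∃ u, G.Adj u v) (i j : V) :
    IsSecureDominating (tokenGraph G) (owner G ⁻¹' {i, j}) ↔ G.Adj i j := by
  rw [tokenGraph, isSecureDominating_cliqueUnion_iff]
  constructor
  · intro h
    by_contra hij
    obtain ⟨u, hu⟩ := hiso i
    have hs : s(i, j) ∈ G.edgeSetᶜ := hij
    have hus : u ∉ s(i, j) := by
      rw [Sym2.mem_iff]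
      rintro (rfl | rfl)
      exacts [hu.ne rfl, hij hu.symm]
    obtain ⟨⟨⟨s, m⟩, hms⟩, (rfl | rfl : m = i ∨ m = j), rfl⟩ := h ⟨(⟨s(i, j), hs⟩, u), hus⟩
    all_goals simp at hms
  · rintro hij ⟨⟨s, m⟩, hms⟩
    have hmiss : i ∉ s.1 ∨ j ∉ s.1 := by
      by_contra! hc
      exact s.2 ((Sym2.mem_and_mem_iff hij.ne).mp hc ▸ hij)
    rcases hmiss with h | h
    exacts [⟨⟨(s, i), h⟩, Or.inl rfl, rfl⟩, ⟨⟨(s, j), h⟩, Or.inr rfl, rfl⟩]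

theorem owner_preimage_union (i j : V) :
    owner G ⁻¹' {i} ∪ owner G ⁻¹' {j} = owner G ⁻¹' {i, j} := by
  rw [← Set.preimage_union, ← Set.insert_eq]

theorem not_isSecureDominating_owner_preimage_singleton (hiso : ∀ v, ∃ u, G.Adj u v) (m : V) :
    ¬ IsSecureDominating (tokenGraph G) (owner G ⁻¹' {m}) := by
  rw [← Set.pair_eq_singleton, isSecureDominating_owner_preimage_pair_iff hiso]
  exact G.loopless.irrefl m

theorem formsSecCoalition_owner_preimage_iff (hiso : ∀ v, ∃ u, G.Adj u v) (i j : V) :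
    FormsSecCoalition (tokenGraph G) (owner G ⁻¹' {i}) (owner G ⁻¹' {j}) ↔ G.Adj i j := by
  rw [FormsSecCoalition, owner_preimage_union, isSecureDominating_owner_preimage_pair_iff hiso]
  refine ⟨fun h => h.2.2.2, fun hij => ⟨?_, ?_, ?_, hij⟩⟩
  · exact (Set.disjoint_singleton.2 hij.ne).preimage _
  all_goals exact not_isSecureDominating_owner_preimage_singleton hiso _

theorem owner_preimage_singleton_injective (hiso : ∀ v, ∃ u, G.Adj u v) :
    Function.Injective fun m => owner G ⁻¹' {m} :=
  (owner_surjective hiso).preimage_injective.comp Set.singleton_injective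

variable [Fintype V]

theorem mem_ownerPartition (m : V) : owner G ⁻¹' {m} ∈ ownerPartition G := by
  classical
  exact Finset.mem_image_of_mem _ (Finset.mem_univ m)

theorem isSecPartition_ownerPartition (hiso : ∀ v, ∃ u, G.Adj u v) :
    IsSecPartition (tokenGraph G) (ownerPartition G) := by
  classical
  refine ⟨?_, fun A hA => Or.inr ?_⟩
  · simpa [ownerPartition] using isPartition_range_preimage_singleton (owner_surjective hiso)
  obtain ⟨m, -, rfl⟩ := Finset.mem_image.1 hA
  obtain ⟨u, hu⟩ := hiso m
  have hsec := ((formsSecCoalition_owner_preimage_iff hiso m u).2 hu.symm)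
  exact ⟨hsec.2.1, _, mem_ownerPartition u,
    (owner_preimage_singleton_injective hiso).ne hu.ne, hsec.2.2.2⟩

noncomputable def ownerPartitionIso (hiso : ∀ v, ∃ u, G.Adj u v) :
    G ≃g SCG (tokenGraph G) (ownerPartition G) where
  toEquiv := Equiv.ofBijective (fun m => ⟨owner G ⁻¹' {m}, mem_ownerPartition m⟩)
    ⟨fun _ _ h => owner_preimage_singleton_injective hiso (congrArg Subtype.val h), by
      classical
      rintro ⟨A, hA⟩
      obtain ⟨m, -, rfl⟩ := Finset.mem_image.1 hA
      exact ⟨m, rfl⟩⟩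
  map_rel_iff' := formsSecCoalition_owner_preimage_iff hiso _ _

end Construction

end SecCoal

theorem stmt17 {V : Type*} [Fintype V] (G : SimpleGraph V)
    (hiso : ∀ v : V, ∃ u, G.Adj u v) :
    ∃ (W : Type) (_ : Fintype W) (H : SimpleGraph W) (π : Finset (Set W)),
      IsSecPartition H π ∧ Nonempty (SCG H π ≃g G) := by
  -- `W` must live in `Type`, so the construction is run on a copy of `G` over `Fin n`
  let G' := G.overFin rfl
  let e : G ≃g G' := G.overFinIso rfl
  have hiso' (v : Fin (Fintype.card V)) : ∃ u, G'.Adj u v := by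
    obtain ⟨u, hu⟩ := hiso (e.symm v)
    exact ⟨e u, by simpa using e.map_adj_iff.2 hu⟩
  exact ⟨Token G', Fintype.ofFinite _, tokenGraph G', ownerPartition G',
    isSecPartition_ownerPartition hiso', ⟨(ownerPartitionIso hiso').symm.trans e.symm⟩⟩
end
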